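/- arXiv:2412.01889 — 3 statements merged into one kernel-verified Lean document; each statement's English description precedes it below -/
import Mathlib

section
/- Let x, y ∈ ℂ^d be vectors with ‖x − y‖₂ ≤ ε for some ε > 0, and assume x ≠ 0 and y ≠ 0. Define probability mass functions P_x(i) = |x(i)|²/‖x‖₂² and P_y(i) = |y(i)|²/‖y‖₂². Then ∑_{i=1}^{d} |P_x(i) − P_y(i)| ≤ 4ε/‖x‖₂. -/
open Finset

lemma minkowski_sum (d : ℕ) (f g : Fin d → ℝ) :
    Real.sqrt (∑ i, (f i + g i) ^ 2) ≤ Real.sqrt (∑ i, f i ^ 2) + Real.sqrt (∑ i, g i ^ 2) := by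
  have hcs := Real.sum_mul_le_sqrt_mul_sqrt univ f g
  have h1 : (0:ℝ) ≤ ∑ i, f i ^ 2 := by positivity
  have h2 : (0:ℝ) ≤ ∑ i, g i ^ 2 := by positivity
  have e1 := Real.sq_sqrt h1
  have e2 := Real.sq_sqrt h2
  have key : ∑ i, (f i + g i) ^ 2 ≤ (Real.sqrt (∑ i, f i ^ 2) + Real.sqrt (∑ i, g i ^ 2)) ^ 2 := by
    have expand : ∑ i, (f i + g i) ^ 2 = ∑ i, f i ^ 2 + 2 * ∑ i, f i * g i + ∑ i, g i ^ 2 := by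
      rw [Finset.mul_sum, ← Finset.sum_add_distrib, ← Finset.sum_add_distrib]
      exact Finset.sum_congr rfl fun i _ => by ring
    nlinarith [Real.sqrt_nonneg (∑ i, f i ^ 2), Real.sqrt_nonneg (∑ i, g i ^ 2)]
  calc Real.sqrt (∑ i, (f i + g i) ^ 2)
      ≤ Real.sqrt ((Real.sqrt (∑ i, f i ^ 2) + Real.sqrt (∑ i, g i ^ 2)) ^ 2) :=
        Real.sqrt_le_sqrt key
    _ = _ := Real.sqrt_sq (by positivity)

lemma tvd_key (d : ℕ) (x y : Fin d → ℂ) (ε : ℝ)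
    (hA : 0 < ∑ j, ‖x j‖ ^ 2) (hB : 0 < ∑ j, ‖y j‖ ^ 2)
    (hdist : Real.sqrt (∑ i, ‖x i - y i‖ ^ 2) ≤ ε) :
    ∑ i, |‖x i‖ ^ 2 / (∑ j, ‖x j‖ ^ 2) - ‖y i‖ ^ 2 / (∑ j, ‖y j‖ ^ 2)| ≤
      2 * ε * (Real.sqrt (∑ j, ‖x j‖ ^ 2) + Real.sqrt (∑ j, ‖y j‖ ^ 2)) /
        (∑ j, ‖x j‖ ^ 2) := by
  have hS0 : ∑ i, |‖x i‖ ^ 2 - ‖y i‖ ^ 2| ≤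
      Real.sqrt (∑ i, (‖x i‖ + ‖y i‖) ^ 2) * Real.sqrt (∑ i, ‖x i - y i‖ ^ 2) := by
    have hpt : ∀ i, |‖x i‖ ^ 2 - ‖y i‖ ^ 2| ≤ (‖x i‖ + ‖y i‖) * ‖x i - y i‖ := by
      intro i
      have h1 : |‖x i‖ - ‖y i‖| ≤ ‖x i - y i‖ := abs_norm_sub_norm_le _ _
      have h2 : |‖x i‖ ^ 2 - ‖y i‖ ^ 2| = (‖x i‖ + ‖y i‖) * |‖x i‖ - ‖y i‖| := by
        rw [sq_sub_sq, abs_mul, abs_of_nonneg (by positivity)]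
      rw [h2]
      exact mul_le_mul_of_nonneg_left h1 (by positivity)
    calc ∑ i, |‖x i‖ ^ 2 - ‖y i‖ ^ 2|
        ≤ ∑ i, (‖x i‖ + ‖y i‖) * ‖x i - y i‖ := Finset.sum_le_sum fun i _ => hpt i
      _ ≤ _ := Real.sum_mul_le_sqrt_mul_sqrt univ _ _
  have hmk : Real.sqrt (∑ i, (‖x i‖ + ‖y i‖) ^ 2) ≤
      Real.sqrt (∑ j, ‖x j‖ ^ 2) + Real.sqrt (∑ j, ‖y j‖ ^ 2) :=
    minkowski_sum d (fun i => ‖x i‖) (fun i => ‖y i‖)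
  have hmk1 : Real.sqrt (∑ i, (‖y i‖ + ‖x i - y i‖) ^ 2) ≤
      Real.sqrt (∑ j, ‖y j‖ ^ 2) + Real.sqrt (∑ i, ‖x i - y i‖ ^ 2) :=
    minkowski_sum d (fun i => ‖y i‖) (fun i => ‖x i - y i‖)
  have hmk2 : Real.sqrt (∑ i, (‖x i‖ + ‖x i - y i‖) ^ 2) ≤
      Real.sqrt (∑ j, ‖x j‖ ^ 2) + Real.sqrt (∑ i, ‖x i - y i‖ ^ 2) :=
    minkowski_sum d (fun i => ‖x i‖) (fun i => ‖x i - y i‖)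
  have hax : Real.sqrt (∑ j, ‖x j‖ ^ 2) ≤
      Real.sqrt (∑ i, (‖y i‖ + ‖x i - y i‖) ^ 2) := by
    apply Real.sqrt_le_sqrt
    apply Finset.sum_le_sum
    intro i _
    have := norm_sub_norm_le (x i) (y i)
    nlinarith [norm_nonneg (x i), norm_nonneg (y i), norm_nonneg (x i - y i)]
  have hay : Real.sqrt (∑ j, ‖y j‖ ^ 2) ≤
      Real.sqrt (∑ i, (‖x i‖ + ‖x i - y i‖) ^ 2) := by
    apply Real.sqrt_le_sqrt
    apply Finset.sum_le_sum
    intro i _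
    have := norm_sub_norm_le (y i) (x i)
    rw [norm_sub_rev] at this
    nlinarith [norm_nonneg (x i), norm_nonneg (y i), norm_nonneg (x i - y i)]
  set A := ∑ j, ‖x j‖ ^ 2 with hAdef
  set B := ∑ j, ‖y j‖ ^ 2 with hBdef
  set a := Real.sqrt A with hadef
  set b := Real.sqrt B with hbdef
  set W := Real.sqrt (∑ i, ‖x i - y i‖ ^ 2) with hWdef
  have ha : 0 < a := Real.sqrt_pos.2 hA
  have hb : 0 < b := Real.sqrt_pos.2 hB
  have hW0 : 0 ≤ W := Real.sqrt_nonneg _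
  have ha2 : a ^ 2 = A := Real.sq_sqrt hA.le
  have hb2 : b ^ 2 = B := Real.sq_sqrt hB.le
  have hA' : A ≠ 0 := hA.ne'
  have hB' : B ≠ 0 := hB.ne'
  clear_value W b a B A
  -- total bound on numerator differences
  have hS : ∑ i, |‖x i‖ ^ 2 - ‖y i‖ ^ 2| ≤ ε * (a + b) := by
    refine hS0.trans ?_
    calc Real.sqrt (∑ i, (‖x i‖ + ‖y i‖) ^ 2) * W
        ≤ (a + b) * ε := mul_le_mul hmk hdist hW0 (by linarith)
      _ = ε * (a + b) := mul_comm _ _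
  have habs : |a - b| ≤ W := by
    have h1 : a ≤ b + W := hax.trans hmk1
    have h2 : b ≤ a + W := hay.trans hmk2
    rw [abs_sub_le_iff]
    constructor <;> linarith
  have hT : |B - A| ≤ ε * (a + b) := by
    have heq : |B - A| = |a - b| * (a + b) := by
      rw [← hb2, ← ha2, show b ^ 2 - a ^ 2 = (b - a) * (b + a) by ring, abs_mul,
        abs_of_nonneg (by linarith : (0:ℝ) ≤ b + a), abs_sub_comm]
      ring
    rw [heq]
    exact mul_le_mul (habs.trans hdist) le_rfl (by linarith) (le_trans hW0 hdist)
  have hsplit : ∀ i, |‖x i‖ ^ 2 / A - ‖y i‖ ^ 2 / B| ≤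
      |‖x i‖ ^ 2 - ‖y i‖ ^ 2| / A + ‖y i‖ ^ 2 * |B - A| / (A * B) := by
    intro i
    have heq : ‖x i‖ ^ 2 / A - ‖y i‖ ^ 2 / B =
        (‖x i‖ ^ 2 - ‖y i‖ ^ 2) / A + ‖y i‖ ^ 2 * (B - A) / (A * B) := by
      field_simp
      ring
    rw [heq]
    refine (abs_add_le _ _).trans ?_
    rw [abs_div, abs_of_pos hA, abs_div, abs_mul,
      abs_of_nonneg (by positivity : (0:ℝ) ≤ ‖y i‖ ^ 2), abs_of_pos (mul_pos hA hB)]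
  calc ∑ i, |‖x i‖ ^ 2 / A - ‖y i‖ ^ 2 / B|
      ≤ ∑ i, (|‖x i‖ ^ 2 - ‖y i‖ ^ 2| / A + ‖y i‖ ^ 2 * |B - A| / (A * B)) :=
        Finset.sum_le_sum fun i _ => hsplit i
    _ = (∑ i, |‖x i‖ ^ 2 - ‖y i‖ ^ 2|) / A + |B - A| / A := by
        rw [Finset.sum_add_distrib, ← Finset.sum_div]
        congr 1
        rw [← Finset.sum_div, ← Finset.sum_mul, ← hBdef]
        field_simp
    _ ≤ ε * (a + b) / A + ε * (a + b) / A :=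
        add_le_add (div_le_div_of_nonneg_right hS hA.le)
          (div_le_div_of_nonneg_right hT hA.le)
    _ = 2 * ε * (a + b) / A := by ring

/-- If `‖x - y‖₂ ≤ ε` for nonzero `x, y ∈ ℂ^d`, then the total variation distance
between their ℓ₂-sampling distributions is at most `4ε/‖x‖₂`. -/
theorem asq_approx_tvd (d : ℕ) (x y : Fin d → ℂ) (ε : ℝ) (hε : 0 < ε)
    (hx : x ≠ 0) (hy : y ≠ 0)
    (hdist : Real.sqrt (∑ i, ‖x i - y i‖ ^ 2) ≤ ε) :
    ∑ i, |‖x i‖ ^ 2 / (∑ j, ‖x j‖ ^ 2) - ‖y i‖ ^ 2 / (∑ j, ‖y j‖ ^ 2)| ≤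
      4 * ε / Real.sqrt (∑ j, ‖x j‖ ^ 2) := by
  have hA : 0 < ∑ j, ‖x j‖ ^ 2 := by
    obtain ⟨i, hi⟩ := Function.ne_iff.1 hx
    have h0 : (0:ℝ) < ‖x i‖ ^ 2 := pow_pos (norm_pos_iff.2 hi) 2
    exact h0.trans_le (Finset.single_le_sum (f := fun j => ‖x j‖ ^ 2)
      (fun j _ => sq_nonneg _) (Finset.mem_univ i))
  have hB : 0 < ∑ j, ‖y j‖ ^ 2 := by
    obtain ⟨i, hi⟩ := Function.ne_iff.1 hy
    have h0 : (0:ℝ) < ‖y i‖ ^ 2 := pow_pos (norm_pos_iff.2 hi) 2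
    exact h0.trans_le (Finset.single_le_sum (f := fun j => ‖y j‖ ^ 2)
      (fun j _ => sq_nonneg _) (Finset.mem_univ i))
  have hdist' : Real.sqrt (∑ i, ‖y i - x i‖ ^ 2) ≤ ε := by
    simpa [norm_sub_rev] using hdist
  have h1 := tvd_key d x y ε hA hB hdist
  have h2 := tvd_key d y x ε hB hA hdist'
  have hsum : ∑ i, |‖y i‖ ^ 2 / (∑ j, ‖y j‖ ^ 2) - ‖x i‖ ^ 2 / (∑ j, ‖x j‖ ^ 2)| =
      ∑ i, |‖x i‖ ^ 2 / (∑ j, ‖x j‖ ^ 2) - ‖y i‖ ^ 2 / (∑ j, ‖y j‖ ^ 2)| :=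
    Finset.sum_congr rfl fun i _ => abs_sub_comm _ _
  rw [hsum] at h2
  have ha : 0 < Real.sqrt (∑ j, ‖x j‖ ^ 2) := Real.sqrt_pos.2 hA
  have hb : 0 < Real.sqrt (∑ j, ‖y j‖ ^ 2) := Real.sqrt_pos.2 hB
  have ha2 : Real.sqrt (∑ j, ‖x j‖ ^ 2) ^ 2 = ∑ j, ‖x j‖ ^ 2 := Real.sq_sqrt hA.le
  have hb2 : Real.sqrt (∑ j, ‖y j‖ ^ 2) ^ 2 = ∑ j, ‖y j‖ ^ 2 := Real.sq_sqrt hB.le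
  rcases le_total (Real.sqrt (∑ j, ‖y j‖ ^ 2)) (Real.sqrt (∑ j, ‖x j‖ ^ 2)) with hba | hba
  · refine h1.trans ?_
    rw [div_le_div_iff₀ hA ha]
    nlinarith [mul_le_mul_of_nonneg_left hba (mul_pos hε ha).le]
  · refine h2.trans ?_
    have step1 : 2 * ε * (Real.sqrt (∑ j, ‖y j‖ ^ 2) + Real.sqrt (∑ j, ‖x j‖ ^ 2)) /
        (∑ j, ‖y j‖ ^ 2) ≤ 4 * ε / Real.sqrt (∑ j, ‖y j‖ ^ 2) := by
      rw [div_le_div_iff₀ hB hb]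
      nlinarith [mul_le_mul_of_nonneg_left hba (mul_pos hε hb).le]
    refine step1.trans ?_
    rw [div_le_div_iff₀ hb ha]
    nlinarith [mul_le_mul_of_nonneg_left hba (by linarith : (0:ℝ) ≤ 4 * ε)]
end

section
/- Let x₁, …, x_τ ∈ ℂ^d, λ₁, …, λ_τ ∈ ℂ, and let x̃₁, …, x̃_τ ∈ ℂ^d satisfy |x̃_k(i)| ≥ |x_k(i)| for all k ∈ [τ] and i ∈ [d], with each x̃_k ≠ 0. Define ũ(i) = sqrt( τ · (∑_{j∈[τ]} ‖x̃_j‖₂²) · ∑_{k∈[τ]} |λ_k|² |x̃_k(i)|²/‖x̃_k‖₂² ). Then for all i ∈ [d], ũ(i) ≥ |∑_{j∈[τ]} λ_j x_j(i)|. -/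
open Finset

/-- The oversampling vector `ũ` for a linear combination dominates the linear
combination entrywise. -/
theorem lin_comb_oversampling_vector (d τ : ℕ)
    (x xt : Fin τ → Fin d → ℂ) (lam : Fin τ → ℂ)
    (hdom : ∀ k i, ‖x k i‖ ≤ ‖xt k i‖)
    (hne : ∀ k, xt k ≠ 0) :
    ∀ i, ‖∑ j, lam j * x j i‖ ≤
      Real.sqrt ((τ : ℝ) * (∑ j, ∑ i', ‖xt j i'‖ ^ 2) *
        ∑ k, ‖lam k‖ ^ 2 * (‖xt k i‖ ^ 2 / ∑ i', ‖xt k i'‖ ^ 2)) := by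
  intro i
  set S : Fin τ → ℝ := fun j => ∑ i', ‖xt j i'‖ ^ 2 with hS
  have hSpos : ∀ j, 0 < S j := by
    intro j
    have : ∃ i', xt j i' ≠ 0 := by
      by_contra h; push_neg at h; exact hne j (funext h)
    obtain ⟨i', hi'⟩ := this
    exact Finset.sum_pos' (fun _ _ => sq_nonneg _)
      ⟨i', Finset.mem_univ _, pow_pos (norm_pos_iff.mpr hi') 2⟩
  set B : ℝ := ∑ k, ‖lam k‖ ^ 2 * (‖xt k i‖ ^ 2 / S k) with hB
  have hBnn : 0 ≤ B := Finset.sum_nonneg fun k _ => by positivity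
  have hAnn : 0 ≤ ∑ j, S j := Finset.sum_nonneg fun j _ => (hSpos j).le
  have h1 : ‖∑ j, lam j * x j i‖ ≤ ∑ j, ‖lam j‖ * ‖xt j i‖ :=
    calc ‖∑ j, lam j * x j i‖ ≤ ∑ j, ‖lam j * x j i‖ := norm_sum_le _ _
    _ ≤ ∑ j, ‖lam j‖ * ‖xt j i‖ := Finset.sum_le_sum fun j _ => by
        rw [norm_mul]; exact mul_le_mul_of_nonneg_left (hdom j i) (norm_nonneg _)
  have h2 : (∑ j, ‖lam j‖ * ‖xt j i‖) ^ 2 ≤ (∑ j, S j) * B := by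
    refine sum_sq_le_sum_mul_sum_of_sq_eq_mul Finset.univ
      (fun j _ => (hSpos j).le) (fun k _ => by positivity) (fun j _ => ?_)
    rw [mul_pow, mul_comm (S j), mul_assoc, div_mul_cancel₀ _ (hSpos j).ne']
  have h3 : (∑ j, S j) * B ≤ (τ : ℝ) * (∑ j, S j) * B := by
    rcases Nat.eq_zero_or_pos τ with h | h
    · subst h; simp [hB]
    · have : (1 : ℝ) ≤ τ := by exact_mod_cast h
      nlinarith [mul_nonneg hAnn hBnn]
  have hsum_nn : 0 ≤ ∑ j, ‖lam j‖ * ‖xt j i‖ :=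
    Finset.sum_nonneg fun j _ => by positivity
  rw [show ((τ : ℝ) * (∑ j, ∑ i', ‖xt j i'‖ ^ 2) *
      ∑ k, ‖lam k‖ ^ 2 * (‖xt k i‖ ^ 2 / ∑ i', ‖xt k i'‖ ^ 2)) = (τ : ℝ) * (∑ j, S j) * B
      from rfl]
  refine le_trans h1 ((Real.le_sqrt hsum_nn
    (mul_nonneg (mul_nonneg (Nat.cast_nonneg τ) hAnn) hBnn)).mpr (le_trans h2 h3))
end

section
/- Let P and Q be probability distributions on [d] with ∑_i |P(i) − Q(i)| ≤ Δ, let γ > 0, and let x, y ∈ ℂ^d and φ ≥ 1 satisfy |x(i)||y(i)| ≤ φ·P(i) for all i. Then ∑_{i : Q(i) ≥ γ} (|P(i) − Q(i)|/Q(i)) |x(i)||y(i)| ≤ φΔ + φ Δ²/γ. -/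
open Finset
open scoped Classical

/-- Robustness of importance sampling to approximate sampling distributions:
if `∑|P − Q| ≤ Δ` and `|x i||y i| ≤ φ P i`, then
`∑_{Q(i) ≥ γ} (|P i − Q i|/Q i)|x i||y i| ≤ φΔ + φΔ²/γ`. -/
theorem approx_sampling_bias_bound (d : ℕ) (P Q : Fin d → ℝ) (Δ γ φ : ℝ)
    (hPnn : ∀ i, 0 ≤ P i) (hPsum : ∑ i, P i = 1)
    (hQnn : ∀ i, 0 ≤ Q i) (hQsum : ∑ i, Q i = 1)
    (hTV : ∑ i, |P i - Q i| ≤ Δ) (hγ : 0 < γ) (hφ : 1 ≤ φ)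
    (x y : Fin d → ℂ)
    (hdom : ∀ i, ‖x i‖ * ‖y i‖ ≤ φ * P i) :
    ∑ i ∈ Finset.univ.filter (fun i => γ ≤ Q i),
        (|P i - Q i| / Q i) * (‖x i‖ * ‖y i‖) ≤ φ * Δ + φ * Δ ^ 2 / γ := by
  have hΔ : 0 ≤ Δ := le_trans (Finset.sum_nonneg fun i _ => abs_nonneg _) hTV
  have hφ0 : 0 ≤ φ := le_trans zero_le_one hφ
  have habs : ∀ i, |P i - Q i| ≤ Δ := fun i =>
    le_trans (Finset.single_le_sum (f := fun j => |P j - Q j|)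
      (fun j _ => abs_nonneg _) (Finset.mem_univ i)) hTV
  have key : ∀ i ∈ Finset.univ.filter (fun i => γ ≤ Q i),
      (|P i - Q i| / Q i) * (‖x i‖ * ‖y i‖) ≤
        (φ + φ * Δ / γ) * |P i - Q i| := by
    intro i hi
    have hQi : γ ≤ Q i := (Finset.mem_filter.mp hi).2
    have hQpos : 0 < Q i := lt_of_lt_of_le hγ hQi
    have h1 : (|P i - Q i| / Q i) * (‖x i‖ * ‖y i‖) ≤
        (|P i - Q i| / Q i) * (φ * P i) :=
      mul_le_mul_of_nonneg_left (hdom i) (div_nonneg (abs_nonneg _) hQpos.le)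
    have hP : P i ≤ Q i + |P i - Q i| := by
      have := le_abs_self (P i - Q i); linarith
    have h2 : (|P i - Q i| / Q i) * (φ * P i) ≤
        (|P i - Q i| / Q i) * (φ * (Q i + |P i - Q i|)) := by
      apply mul_le_mul_of_nonneg_left _ (div_nonneg (abs_nonneg _) hQpos.le)
      exact mul_le_mul_of_nonneg_left hP hφ0
    have h3 : (|P i - Q i| / Q i) * (φ * (Q i + |P i - Q i|)) =
        φ * |P i - Q i| + φ * |P i - Q i| * (|P i - Q i| / Q i) := by
      field_simp
    have hdiv : |P i - Q i| / Q i ≤ Δ / γ :=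
      div_le_div₀ hΔ (habs i) hγ hQi
    calc (|P i - Q i| / Q i) * (‖x i‖ * ‖y i‖)
        ≤ φ * |P i - Q i| + φ * |P i - Q i| * (|P i - Q i| / Q i) := by
          rw [← h3]; exact le_trans h1 h2
      _ ≤ φ * |P i - Q i| + φ * |P i - Q i| * (Δ / γ) := by
          have := mul_le_mul_of_nonneg_left hdiv
            (mul_nonneg hφ0 (abs_nonneg (P i - Q i)))
          linarith
      _ = (φ + φ * Δ / γ) * |P i - Q i| := by ring
  calc ∑ i ∈ Finset.univ.filter (fun i => γ ≤ Q i),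
        (|P i - Q i| / Q i) * (‖x i‖ * ‖y i‖)
      ≤ ∑ i ∈ Finset.univ.filter (fun i => γ ≤ Q i),
        (φ + φ * Δ / γ) * |P i - Q i| := Finset.sum_le_sum key
    _ = (φ + φ * Δ / γ) * ∑ i ∈ Finset.univ.filter (fun i => γ ≤ Q i),
        |P i - Q i| := by rw [Finset.mul_sum]
    _ ≤ (φ + φ * Δ / γ) * Δ := by
        apply mul_le_mul_of_nonneg_left _
          (by positivity)
        exact le_trans (Finset.sum_le_sum_of_subset_of_nonneg
          (Finset.filter_subset _ _) (fun i _ _ => abs_nonneg _)) hTV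
    _ = φ * Δ + φ * Δ ^ 2 / γ := by field_simp
end
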